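/- arXiv:1806.08142 — 2 statements merged into one kernel-verified Lean document; each statement's English description precedes it below -/
import Mathlib

section
/- Let π be a Poisson tensor on ℝ^N that does not depend on the variable x_p for some fixed 1 ≤ p ≤ N, let c be a Casimir function for π, and let c' be a Casimir function for π with ∂c'/∂x_p ≡ 0. Then the two functions on ℝ^{2N} given by F₁(x,y) = c'(x) and F₂(x,y) = ∑_{s=1}^N (∂c'/∂x_s)(x) y_s are Casimir functions for the Poisson tensor Π_{TM,c(x)} on ℝ^{2N} with blocks Π^{xx}=0, Π^{xy}=π(x)+c(x)E_pp, Π^{yx}=π(x)−c(x)E_pp, Π^{yy}=∑_s (∂π/∂x_s)(x) y_s. If moreover c is a linear Casimir function, then F₁ and F₂ are also Casimir functions for the Poisson tensor Π_{TM,c(y)} with the same blocks except that c(y) replaces c(x). -/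
/-! The gradient of `F₁ = c' ∘ x` is `(∇c', 0)` and that of `F₂ = ∑ₛ yₛ ∂ₛc'` is `(H y, ∇c')`,
`H` the Hessian of `c'`. Against the blocks of `Π`, the `π` entries give `∇c' ⬝ π = 0`, and the
`yy` block pairs with `H y ⬝ π` to the derivative along `y` of that identity. The `E_pp` entries
only meet the `p`-th components `∂ₚc'` and `∂ₚ∂ₛc' = ∂ₛ∂ₚc'`, which vanish. -/

open scoped ContDiff

/-- Partial derivative `∂f/∂z_s` at `z`, for functions on `ℝ^ι`. -/
noncomputable def pd {ι : Type} [Fintype ι] [DecidableEq ι]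
    (s : ι) (f : (ι → ℝ) → ℝ) (x : ι → ℝ) : ℝ :=
  fderiv ℝ f x (Pi.single s 1)

/-- A Poisson tensor on `ℝ^ι`: a smooth antisymmetric matrix field satisfying the
Jacobi condition. -/
def IsPoissonTensor {ι : Type} [Fintype ι] [DecidableEq ι]
    (π : (ι → ℝ) → Matrix ι ι ℝ) : Prop :=
  (∀ i j, ContDiff ℝ ∞ fun x => π x i j) ∧
  (∀ x i j, π x j i = - π x i j) ∧
  (∀ x i j k, ∑ s, (pd s (fun y => π y i j) x * π x s k
      + pd s (fun y => π y k i) x * π x s j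
      + pd s (fun y => π y j k) x * π x s i) = 0)

/-- `c` is a (smooth) Casimir function for `π`. -/
def IsCasimir {ι : Type} [Fintype ι] [DecidableEq ι]
    (π : (ι → ℝ) → Matrix ι ι ℝ) (c : (ι → ℝ) → ℝ) : Prop :=
  ContDiff ℝ ∞ c ∧ ∀ x j, ∑ s, pd s c x * π x s j = 0

/-- The matrix of partial derivatives `(∂π_{ij}/∂x_s)(x)`. -/
noncomputable def pdMat {N : ℕ} (s : Fin N)
    (π : (Fin N → ℝ) → Matrix (Fin N) (Fin N) ℝ) (x : Fin N → ℝ) :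
    Matrix (Fin N) (Fin N) ℝ :=
  Matrix.of fun i j => pd s (fun y => π y i j) x

/-- The `x`-part of a point `z = (x,y) ∈ ℝ^{2N}`. -/
def Xc {N : ℕ} (z : (Fin N ⊕ Fin N) → ℝ) : Fin N → ℝ := fun i => z (Sum.inl i)

/-- The `y`-part of a point `z = (x,y) ∈ ℝ^{2N}`. -/
def Yc {N : ℕ} (z : (Fin N ⊕ Fin N) → ℝ) : Fin N → ℝ := fun i => z (Sum.inr i)

/-- A linear function `c(x) = ∑ s, a_s x_s`. -/
def IsLinearFun {N : ℕ} (c : (Fin N → ℝ) → ℝ) : Prop :=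
  ∃ a : Fin N → ℝ, ∀ x, c x = ∑ s, a s * x s

/-- The tensor `Π_{TM,c(x)}` on `ℝ^{2N}`. -/
noncomputable def tensorCX {N : ℕ} (π : (Fin N → ℝ) → Matrix (Fin N) (Fin N) ℝ)
    (p : Fin N) (c : (Fin N → ℝ) → ℝ) (z : (Fin N ⊕ Fin N) → ℝ) :
    Matrix (Fin N ⊕ Fin N) (Fin N ⊕ Fin N) ℝ :=
  Matrix.fromBlocks
    0
    (π (Xc z) + c (Xc z) • Matrix.single p p (1 : ℝ))
    (π (Xc z) - c (Xc z) • Matrix.single p p (1 : ℝ))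
    (∑ s, Yc z s • pdMat s π (Xc z))

/-- The tensor `Π_{TM,c(y)}` on `ℝ^{2N}`. -/
noncomputable def tensorCY {N : ℕ} (π : (Fin N → ℝ) → Matrix (Fin N) (Fin N) ℝ)
    (p : Fin N) (c : (Fin N → ℝ) → ℝ) (z : (Fin N ⊕ Fin N) → ℝ) :
    Matrix (Fin N ⊕ Fin N) (Fin N ⊕ Fin N) ℝ :=
  Matrix.fromBlocks
    0
    (π (Xc z) + c (Yc z) • Matrix.single p p (1 : ℝ))
    (π (Xc z) - c (Yc z) • Matrix.single p p (1 : ℝ))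
    (∑ s, Yc z s • pdMat s π (Xc z))

open Matrix

section BlockAlgebra

variable {n R : Type*} [Fintype n] [DecidableEq n] [CommRing R]

lemma vecMul_single_self_eq_zero {v : n → R} {p : n} (hv : v p = 0) (a : R) :
    v ᵥ* single p p a = 0 := by
  ext j
  refine Finset.sum_eq_zero fun i _ => ?_
  by_cases hi : p = i
  · simp [← hi, hv]
  · simp [hi]

lemma vecMul_add_smul_single_self {v : n → R} {p : n} (hv : v p = 0) (A : Matrix n n R) (r : R) :
    v ᵥ* (A + r • single p p 1) = v ᵥ* A := by
  rw [vecMul_add, vecMul_smul, vecMul_single_self_eq_zero hv, smul_zero, add_zero]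

lemma vecMul_sub_smul_single_self {v : n → R} {p : n} (hv : v p = 0) (A : Matrix n n R) (r : R) :
    v ᵥ* (A - r • single p p 1) = v ᵥ* A := by
  rw [vecMul_sub, vecMul_smul, vecMul_single_self_eq_zero hv, smul_zero, sub_zero]

lemma elim_vecMul_fromBlocks_eq_zero {u w : n → R} {p : n} (hu : u p = 0) (hw : w p = 0)
    {A D : Matrix n n R} (huA : u ᵥ* A = 0) (hwAD : w ᵥ* A + u ᵥ* D = 0) (r : R) :
    Sum.elim w u ᵥ* fromBlocks 0 (A + r • single p p 1) (A - r • single p p 1) D = 0 := by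
  rw [vecMul_fromBlocks]
  simp only [Sum.elim_comp_inl, Sum.elim_comp_inr, vecMul_zero, zero_add,
    vecMul_add_smul_single_self hw, vecMul_sub_smul_single_self hu, huA, hwAD, Sum.elim_zero_zero]

end BlockAlgebra

section PartialDerivatives

variable {ι : Type} [Fintype ι] [DecidableEq ι]

noncomputable def grad (f : (ι → ℝ) → ℝ) (x : ι → ℝ) : ι → ℝ := fun s => pd s f x

lemma isCasimir_iff_grad_vecMul {π : (ι → ℝ) → Matrix ι ι ℝ} {c : (ι → ℝ) → ℝ} :
    IsCasimir π c ↔ ContDiff ℝ ∞ c ∧ ∀ x, grad c x ᵥ* π x = 0 := by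
  simp only [IsCasimir, funext_iff, vecMul, dotProduct, grad, Pi.zero_apply]

lemma contDiff_pd (s : ι) {f : (ι → ℝ) → ℝ} (hf : ContDiff ℝ ∞ f) : ContDiff ℝ ∞ (pd s f) :=
  (hf.fderiv_right (by simp)).clm_apply contDiff_const

lemma pd_pd_eq_fderiv_fderiv {f : (ι → ℝ) → ℝ} (hf : ContDiff ℝ ∞ f) (x : ι → ℝ) (i s : ι) :
    pd i (pd s f) x = fderiv ℝ (fderiv ℝ f) x (Pi.single i 1) (Pi.single s 1) := by
  have hd : DifferentiableAt ℝ (fderiv ℝ f) x :=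
    ((hf.fderiv_right (m := ∞) (by simp)).differentiable (by simp)).differentiableAt
  change fderiv ℝ (fun y => fderiv ℝ f y (Pi.single s 1)) x (Pi.single i 1) = _
  simp [fderiv_clm_apply hd (differentiableAt_const _)]

lemma pd_comm {f : (ι → ℝ) → ℝ} (hf : ContDiff ℝ ∞ f) (x : ι → ℝ) (i s : ι) :
    pd i (pd s f) x = pd s (pd i f) x := by
  rw [pd_pd_eq_fderiv_fderiv hf, pd_pd_eq_fderiv_fderiv hf]
  exact hf.contDiffAt.isSymmSndFDerivAt (by simpa using ENat.LEInfty.out) _ _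

lemma pd_eq_zero_of_forall_eq_zero {f : (ι → ℝ) → ℝ} (hf : ∀ x, f x = 0) (s : ι) (x : ι → ℝ) :
    pd s f x = 0 := by
  simp [pd, funext hf]

lemma pd_mul {f g : (ι → ℝ) → ℝ} {x : ι → ℝ} (hf : DifferentiableAt ℝ f x)
    (hg : DifferentiableAt ℝ g x) (s : ι) :
    pd s (fun y => f y * g y) x = pd s f x * g x + f x * pd s g x := by
  simp [pd, fderiv_fun_mul hf hg]
  ring

lemma pd_sum {κ : Type*} {u : Finset κ} {f : κ → (ι → ℝ) → ℝ} {x : ι → ℝ}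
    (hf : ∀ k ∈ u, DifferentiableAt ℝ (f k) x) (s : ι) :
    pd s (fun y => ∑ k ∈ u, f k y) x = ∑ k ∈ u, pd s (f k) x := by
  simp [pd, fderiv_fun_sum hf]

lemma pd_apply (s k : ι) (x : ι → ℝ) :
    pd s (fun y => y k) x = Pi.single (M := fun _ => ℝ) s 1 k := by
  simp [pd, (hasFDerivAt_apply k x).fderiv]

lemma pd_comp_clm {κ : Type} [Fintype κ] {f : (κ → ℝ) → ℝ} (L : (ι → ℝ) →L[ℝ] (κ → ℝ))
    {x : ι → ℝ} (hf : DifferentiableAt ℝ f (L x)) (s : ι) :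
    pd s (fun y => f (L y)) x = fderiv ℝ f (L x) (L (Pi.single s 1)) := by
  simp [pd, fderiv_fun_comp x hf L.differentiableAt]

end PartialDerivatives

lemma IsCasimir.grad_pd_vecMul_add_grad_vecMul_pdMat {N : ℕ}
    {π : (Fin N → ℝ) → Matrix (Fin N) (Fin N) ℝ} {c : (Fin N → ℝ) → ℝ} (hc : IsCasimir π c)
    (hπ : ∀ i j, ContDiff ℝ ∞ fun x => π x i j)
    (t : Fin N) (x : Fin N → ℝ) :
    grad (pd t c) x ᵥ* π x + grad c x ᵥ* pdMat t π x = 0 := by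
  ext j
  have hdiff : ∀ i ∈ Finset.univ, DifferentiableAt ℝ (fun y => pd i c y * π y i j) x :=
    fun i _ => ((contDiff_pd i hc.1).differentiable (by simp) x).mul
      ((hπ i j).differentiable (by simp) x)
  have h := pd_eq_zero_of_forall_eq_zero (hc.2 · j) t x
  rw [pd_sum (f := fun i y => pd i c y * π y i j) hdiff] at h
  simp only [vecMul, dotProduct, grad, pdMat, Matrix.of_apply, Pi.add_apply, Pi.zero_apply,
    ← Finset.sum_add_distrib, ← h]
  refine Finset.sum_congr rfl fun i _ => ?_
  rw [pd_mul ((contDiff_pd i hc.1).differentiable (by simp) x)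
    ((hπ i j).differentiable (by simp) x), pd_comm hc.1]

section TangentLift

variable {N : ℕ}

noncomputable def xProj (N : ℕ) : ((Fin N ⊕ Fin N) → ℝ) →L[ℝ] (Fin N → ℝ) :=
  ContinuousLinearMap.pi fun i => ContinuousLinearMap.proj (Sum.inl i)

lemma xProj_apply (z : (Fin N ⊕ Fin N) → ℝ) : xProj N z = Xc z := rfl

lemma xProj_single (k : Fin N ⊕ Fin N) :
    xProj N (Pi.single k 1) = Sum.elim (fun i => Pi.single i 1) 0 k := by
  ext j
  cases k <;> simp [xProj, Pi.single_apply]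

def verticalLift (f : (Fin N → ℝ) → ℝ) (z : (Fin N ⊕ Fin N) → ℝ) : ℝ := f (Xc z)

noncomputable def completeLift (f : (Fin N → ℝ) → ℝ) (z : (Fin N ⊕ Fin N) → ℝ) : ℝ :=
  ∑ s, pd s f (Xc z) * Yc z s

lemma differentiable_verticalLift {f : (Fin N → ℝ) → ℝ} (hf : Differentiable ℝ f) :
    Differentiable ℝ (verticalLift f) :=
  hf.comp (xProj N).differentiable

lemma contDiff_verticalLift {f : (Fin N → ℝ) → ℝ} (hf : ContDiff ℝ ∞ f) :
    ContDiff ℝ ∞ (verticalLift f) :=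
  hf.comp (xProj N).contDiff

lemma contDiff_completeLift {f : (Fin N → ℝ) → ℝ} (hf : ContDiff ℝ ∞ f) :
    ContDiff ℝ ∞ (completeLift f) :=
  ContDiff.sum fun s _ => (contDiff_verticalLift (contDiff_pd s hf)).mul (contDiff_apply _ _ _)

lemma pd_verticalLift {f : (Fin N → ℝ) → ℝ} (hf : Differentiable ℝ f)
    (z : (Fin N ⊕ Fin N) → ℝ) (k : Fin N ⊕ Fin N) :
    pd k (verticalLift f) z = Sum.elim (grad f (Xc z)) 0 k := by
  change pd k (fun z => f (xProj N z)) z = _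
  rw [pd_comp_clm _ (hf _), xProj_single]
  cases k <;> simp [grad, pd, xProj_apply]

lemma grad_verticalLift {f : (Fin N → ℝ) → ℝ} (hf : Differentiable ℝ f)
    (z : (Fin N ⊕ Fin N) → ℝ) :
    grad (verticalLift f) z = Sum.elim (grad f (Xc z)) 0 :=
  funext (pd_verticalLift hf z)

lemma grad_completeLift {f : (Fin N → ℝ) → ℝ} (hf : ContDiff ℝ ∞ f)
    (z : (Fin N ⊕ Fin N) → ℝ) :
    grad (completeLift f) z = Sum.elim (∑ s, Yc z s • grad (pd s f) (Xc z)) (grad f (Xc z)) := by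
  have hpd : ∀ s, Differentiable ℝ (pd s f) := fun s => (contDiff_pd s hf).differentiable (by simp)
  ext k
  change pd k (fun z => ∑ s, verticalLift (pd s f) z * z (Sum.inr s)) z = _
  rw [pd_sum (f := fun s z => verticalLift (pd s f) z * z (Sum.inr s))
    fun s _ => (differentiable_verticalLift (hpd s) z).mul (differentiableAt_apply _ _)]
  refine (Finset.sum_congr rfl fun s _ => pd_mul (differentiable_verticalLift (hpd s) z)
    (differentiableAt_apply _ _) k).trans ?_
  simp only [pd_verticalLift (hpd _), pd_apply]
  cases k <;> simp [grad, verticalLift, Yc, Finset.sum_apply, mul_comm, Pi.single_apply]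

end TangentLift

noncomputable def tangentTensor {N : ℕ} (π : (Fin N → ℝ) → Matrix (Fin N) (Fin N) ℝ) (p : Fin N)
    (r : ((Fin N ⊕ Fin N) → ℝ) → ℝ) (z : (Fin N ⊕ Fin N) → ℝ) :
    Matrix (Fin N ⊕ Fin N) (Fin N ⊕ Fin N) ℝ :=
  fromBlocks 0 (π (Xc z) + r z • single p p 1) (π (Xc z) - r z • single p p 1)
    (∑ s, Yc z s • pdMat s π (Xc z))

section TangentTensor

variable {N : ℕ} {π : (Fin N → ℝ) → Matrix (Fin N) (Fin N) ℝ} {p : Fin N}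
  {f : (Fin N → ℝ) → ℝ}

lemma isCasimir_tangentTensor_verticalLift (hf : IsCasimir π f) (hfp : ∀ x, pd p f x = 0)
    (r : ((Fin N ⊕ Fin N) → ℝ) → ℝ) :
    IsCasimir (tangentTensor π p r) (verticalLift f) := by
  obtain ⟨hsmooth, hgrad⟩ := isCasimir_iff_grad_vecMul.mp hf
  rw [isCasimir_iff_grad_vecMul]
  refine ⟨contDiff_verticalLift hsmooth, fun z => ?_⟩
  rw [grad_verticalLift (hsmooth.differentiable (by simp))]
  exact elim_vecMul_fromBlocks_eq_zero (u := 0) (w := grad f (Xc z)) rfl (hfp _) (zero_vecMul _)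
    (by rw [hgrad, zero_vecMul, add_zero]) _

lemma isCasimir_tangentTensor_completeLift (hπ : ∀ i j, ContDiff ℝ ∞ fun x => π x i j)
    (hf : IsCasimir π f) (hfp : ∀ x, pd p f x = 0) (r : ((Fin N ⊕ Fin N) → ℝ) → ℝ) :
    IsCasimir (tangentTensor π p r) (completeLift f) := by
  obtain ⟨hsmooth, hgrad⟩ := isCasimir_iff_grad_vecMul.mp hf
  rw [isCasimir_iff_grad_vecMul]
  refine ⟨contDiff_completeLift hsmooth, fun z => ?_⟩
  have hp : (∑ s, Yc z s • grad (pd s f) (Xc z)) p = 0 := by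
    simp [Finset.sum_apply, grad, pd_comm hsmooth _ p, pd_eq_zero_of_forall_eq_zero hfp]
  rw [grad_completeLift hsmooth]
  refine elim_vecMul_fromBlocks_eq_zero (u := grad f (Xc z)) (hfp _) hp (hgrad _) ?_ _
  simp only [sum_vecMul, vecMul_sum, smul_vecMul, vecMul_smul, ← Finset.sum_add_distrib,
    ← smul_add, hf.grad_pd_vecMul_add_grad_vecMul_pdMat hπ, smul_zero, Finset.sum_const_zero]

end TangentTensor

theorem stmt5_general {N : ℕ}
    (π : (Fin N → ℝ) → Matrix (Fin N) (Fin N) ℝ) (hπ : IsPoissonTensor π)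
    (p : Fin N)
    (c : (Fin N → ℝ) → ℝ)
    (c' : (Fin N → ℝ) → ℝ) (hc' : IsCasimir π c')
    (hc'p : ∀ x, pd p c' x = 0) :
    IsCasimir (tensorCX π p c) (fun z => c' (Xc z)) ∧
    IsCasimir (tensorCX π p c) (fun z => ∑ s, pd s c' (Xc z) * z (Sum.inr s)) ∧
    (IsLinearFun c →
      IsCasimir (tensorCY π p c) (fun z => c' (Xc z)) ∧
      IsCasimir (tensorCY π p c) (fun z => ∑ s, pd s c' (Xc z) * z (Sum.inr s))) := by
  have vertical := isCasimir_tangentTensor_verticalLift hc' hc'p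
  have complete := isCasimir_tangentTensor_completeLift hπ.1 hc' hc'p
  exact ⟨vertical (c ∘ Xc), complete (c ∘ Xc), fun _ => ⟨vertical (c ∘ Yc), complete (c ∘ Yc)⟩⟩

/-- `F₁(x,y) = c'(x)` and `F₂(x,y) = ∑ s (∂c'/∂x_s)(x) y_s` are Casimir
functions for `Π_{TM,c(x)}`, and also for `Π_{TM,c(y)}` when `c` is linear. -/
theorem stmt5 {N : ℕ} (hN : 1 ≤ N)
    (π : (Fin N → ℝ) → Matrix (Fin N) (Fin N) ℝ) (hπ : IsPoissonTensor π)
    (p : Fin N) (hp : ∀ x i j, pd p (fun y => π y i j) x = 0)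
    (c : (Fin N → ℝ) → ℝ) (hc : IsCasimir π c)
    (c' : (Fin N → ℝ) → ℝ) (hc' : IsCasimir π c')
    (hc'p : ∀ x, pd p c' x = 0) :
    IsCasimir (tensorCX π p c) (fun z => c' (Xc z)) ∧
    IsCasimir (tensorCX π p c) (fun z => ∑ s, pd s c' (Xc z) * z (Sum.inr s)) ∧
    (IsLinearFun c →
      IsCasimir (tensorCY π p c) (fun z => c' (Xc z)) ∧
      IsCasimir (tensorCY π p c) (fun z => ∑ s, pd s c' (Xc z) * z (Sum.inr s))) :=
  stmt5_general π hπ p c c' hc' hc'p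
end

section
/- Let π be a linear Poisson tensor on ℝ^N that does not depend on the variable x_p for some fixed 1 ≤ p ≤ N, and let c be a Casimir function for π. Then for every λ ∈ ℝ the 2N×2N matrix field on ℝ^{2N} with blocks Π^{xx}(x,y) = λ·π(x), Π^{xy}(x,y) = π(x) + c(x)·E_pp, Π^{yx}(x,y) = π(x) − c(x)·E_pp, Π^{yy}(x,y) = π(y) is a Poisson tensor on ℝ^{2N}. -/
open scoped ContDiff

/-- A linear (Lie–Poisson) tensor: `π_{ij}(x) = ∑ n, c^n_{ij} x_n`. -/
def IsLinearTensor {N : ℕ} (π : (Fin N → ℝ) → Matrix (Fin N) (Fin N) ℝ) : Prop :=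
  ∃ C : Fin N → Fin N → Fin N → ℝ, ∀ x i j, π x i j = ∑ n, C i j n * x n

/-!
Write `Π` for the block field. Its entries are affine in `(π(x), c(x), π(y))`, so `∂Π/∂x_s` and
`∂Π/∂y_s` are block fields of the same shape, built from `∂_s π` and `∂_s c`.
Splitting the Jacobi sum of `Π` into its `x`- and `y`-indices, each of its eight index types reduces
to a combination of the Jacobi identity of `π` (at `x` or at `y`), the Casimir identity
`∑ s, ∂_s c · π_{sb} = 0` and `∂_p π = 0`; by cyclic symmetry four types suffice. The type
`(x, y, y)` pairs `∂_s π(y)` with `π(x)`, and closes only because the partial derivatives of a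
linear tensor do not depend on the point.
-/

open Matrix

section Algebra

variable {ι : Type*}

-- For `D s = ∂_s π (x)` and `B = π x` this is the sum in the Jacobi condition of `IsPoissonTensor`.
def jacobiator [Fintype ι] (D : ι → Matrix ι ι ℝ) (B : Matrix ι ι ℝ) (i j k : ι) : ℝ :=
  ∑ s, (D s i j * B s k + D s k i * B s j + D s j k * B s i)

lemma jacobiator_cycle [Fintype ι] (D : ι → Matrix ι ι ℝ) (B : Matrix ι ι ℝ) (i j k : ι) :
    jacobiator D B i j k = jacobiator D B k i j :=
  Finset.sum_congr rfl fun _ _ => by ring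

-- The field of the theorem is `blockTensor λ e_p (π x) (c x) (π y)`, since `E_pp = e_p e_pᵀ`.
def blockTensor (lam : ℝ) (e : ι → ℝ) (P : Matrix ι ι ℝ) (c : ℝ) (Q : Matrix ι ι ℝ) :
    Matrix (ι ⊕ ι) (ι ⊕ ι) ℝ :=
  fromBlocks (lam • P) (P + c • vecMulVec e e) (P - c • vecMulVec e e) Q

-- `∂/∂x_s` and `∂/∂y_s` of `blockTensor λ e (P x) (c x) (Q y)`, when `∂_s P = ∂_s Q = D s` and
-- `∂_s c = g s`.
def blockDeriv (lam : ℝ) (e : ι → ℝ) (D : ι → Matrix ι ι ℝ) (g : ι → ℝ) :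
    ι ⊕ ι → Matrix (ι ⊕ ι) (ι ⊕ ι) ℝ :=
  Sum.elim (fun s => blockTensor lam e (D s) (g s) 0) (fun s => blockTensor lam e 0 0 (D s))

lemma blockTensor_apply_swap {lam c : ℝ} {e : ι → ℝ} {P Q : Matrix ι ι ℝ}
    (hP : ∀ a b, P b a = -P a b) (hQ : ∀ a b, Q b a = -Q a b) (i j : ι ⊕ ι) :
    blockTensor lam e P c Q j i = -blockTensor lam e P c Q i j := by
  rcases i with a | a <;> rcases j with b | b <;>
    simp only [blockTensor, fromBlocks_apply₁₁, fromBlocks_apply₁₂, fromBlocks_apply₂₁,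
      fromBlocks_apply₂₂, Matrix.add_apply, Matrix.sub_apply, Matrix.smul_apply, smul_eq_mul,
      vecMulVec_apply, hP b a, hQ b a] <;> ring

theorem jacobiator_blockTensor_eq_zero [Fintype ι] {lam c : ℝ} {e g : ι → ℝ}
    {D : ι → Matrix ι ι ℝ} {P Q : Matrix ι ι ℝ}
    (hP : ∀ a b d, jacobiator D P a b d = 0) (hQ : ∀ a b d, jacobiator D Q a b d = 0)
    (hg : ∀ b, ∑ s, g s * P s b = 0) (he : ∀ a b, ∑ s, D s a b * e s = 0) (i j k : ι ⊕ ι) :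
    jacobiator (blockDeriv lam e D g) (blockTensor lam e P c Q) i j k = 0 := by
  set J := jacobiator (blockDeriv lam e D g) (blockTensor lam e P c Q) with hJ
  have base : ∀ a b d, J (.inl a) (.inl b) (.inl d) = 0 ∧ J (.inl a) (.inl b) (.inr d) = 0 ∧
      J (.inl a) (.inr b) (.inr d) = 0 ∧ J (.inr a) (.inr b) (.inr d) = 0 := by
    intro a b d
    have expand :
        J (.inl a) (.inl b) (.inl d) = lam ^ 2 * jacobiator D P a b d ∧
        J (.inl a) (.inl b) (.inr d) = lam * jacobiator D P a b d
          + lam * c * e d * (∑ s, D s a b * e s)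
          - lam * e d * e a * (∑ s, g s * P s b) + lam * e b * e d * (∑ s, g s * P s a) ∧
        J (.inl a) (.inr b) (.inr d) = jacobiator D P a b d
          + c * e d * (∑ s, D s a b * e s) + c * e b * (∑ s, D s d a * e s)
          - c * e a * (∑ s, D s b d * e s)
          + e a * e b * (∑ s, g s * P s d) - e d * e a * (∑ s, g s * P s b) ∧
        J (.inr a) (.inr b) (.inr d) = jacobiator D Q a b d := by
      refine ⟨?_, ?_, ?_, ?_⟩ <;>
        simp only [hJ, jacobiator, Fintype.sum_sum_type, blockDeriv, Sum.elim_inl, Sum.elim_inr,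
          blockTensor, fromBlocks_apply₁₁, fromBlocks_apply₁₂, fromBlocks_apply₂₁,
          fromBlocks_apply₂₂, Matrix.add_apply, Matrix.sub_apply, Matrix.smul_apply,
          Matrix.zero_apply, smul_eq_mul, vecMulVec_apply, Finset.mul_sum,
          ← Finset.sum_add_distrib, ← Finset.sum_sub_distrib] <;>
        exact Finset.sum_congr rfl fun s _ => by ring
    simp only [expand, hP, hQ, hg, he, mul_zero, add_zero, sub_zero, and_self]
  have cyc : ∀ i j k, J i j k = J k i j := jacobiator_cycle _ _
  rcases i with a | a <;> rcases j with b | b <;> rcases k with d | d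
  · exact (base a b d).1
  · exact (base a b d).2.1
  · rw [cyc]; exact (base d a b).2.1
  · exact (base a b d).2.2.1
  · rw [cyc, cyc]; exact (base b d a).2.1
  · rw [cyc, cyc]; exact (base b d a).2.2.1
  · rw [cyc]; exact (base d a b).2.2.1
  · exact (base a b d).2.2.2

end Algebra

section PartialDerivative

variable {ι : Type} [Fintype ι] [DecidableEq ι] {f g : (ι → ℝ) → ℝ} {x : ι → ℝ}

lemma pd_add (hf : DifferentiableAt ℝ f x) (hg : DifferentiableAt ℝ g x) (s : ι) :
    pd s (fun y => f y + g y) x = pd s f x + pd s g x := by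
  rw [pd, pd, pd, fderiv_fun_add hf hg]
  rfl

lemma pd_sub (hf : DifferentiableAt ℝ f x) (hg : DifferentiableAt ℝ g x) (s : ι) :
    pd s (fun y => f y - g y) x = pd s f x - pd s g x := by
  rw [pd, pd, pd, fderiv_fun_sub hf hg]
  rfl

lemma pd_const_mul (hf : DifferentiableAt ℝ f x) (a : ℝ) (s : ι) :
    pd s (fun y => a * f y) x = a * pd s f x := by
  rw [pd, pd, fderiv_const_mul hf a]
  rfl

lemma pd_mul_const (hf : DifferentiableAt ℝ f x) (a : ℝ) (s : ι) :
    pd s (fun y => f y * a) x = pd s f x * a := by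
  rw [pd, pd, fderiv_mul_const hf a, mul_comm]
  rfl

lemma pd_comp_reindex {κ : Type} [Fintype κ] (σ : κ → ι) {f : (κ → ℝ) → ℝ}
    (hf : DifferentiableAt ℝ f fun k => x (σ k)) (s : ι) :
    pd s (fun y => f fun k => y (σ k)) x
      = fderiv ℝ f (fun k => x (σ k)) (fun k => (Pi.single s 1 : ι → ℝ) (σ k)) := by
  let L : (ι → ℝ) →L[ℝ] κ → ℝ := ContinuousLinearMap.pi fun k => ContinuousLinearMap.proj (σ k)
  have h : HasFDerivAt (fun y => f fun k => y (σ k)) ((fderiv ℝ f _).comp L) x :=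
    hf.hasFDerivAt.comp x L.hasFDerivAt
  rw [pd, h.fderiv]
  rfl

end PartialDerivative

section Coordinates

variable {N : ℕ} {f : (Fin N → ℝ) → ℝ} {z : (Fin N ⊕ Fin N) → ℝ}

lemma contDiff_Xc {n : WithTop ℕ∞} : ContDiff ℝ n (Xc : ((Fin N ⊕ Fin N) → ℝ) → Fin N → ℝ) :=
  contDiff_pi.2 fun _ => contDiff_apply _ _ _

lemma contDiff_Yc {n : WithTop ℕ∞} : ContDiff ℝ n (Yc : ((Fin N ⊕ Fin N) → ℝ) → Fin N → ℝ) :=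
  contDiff_pi.2 fun _ => contDiff_apply _ _ _

lemma Xc_single_inl (s : Fin N) (a : ℝ) : Xc (Pi.single (Sum.inl s) a) = Pi.single s a := by
  funext t
  simp [Xc, Pi.single_apply]

lemma Xc_single_inr (s : Fin N) (a : ℝ) : Xc (Pi.single (Sum.inr s) a) = 0 := by
  funext t
  simp [Xc]

lemma Yc_single_inr (s : Fin N) (a : ℝ) : Yc (Pi.single (Sum.inr s) a) = Pi.single s a := by
  funext t
  simp [Yc, Pi.single_apply]

lemma Yc_single_inl (s : Fin N) (a : ℝ) : Yc (Pi.single (Sum.inl s) a) = 0 := by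
  funext t
  simp [Yc]

lemma pd_comp_Xc (hf : DifferentiableAt ℝ f (Xc z)) (s : Fin N ⊕ Fin N) :
    pd s (fun w => f (Xc w)) z = fderiv ℝ f (Xc z) (Xc (Pi.single s 1)) :=
  pd_comp_reindex Sum.inl hf s

lemma pd_comp_Yc (hf : DifferentiableAt ℝ f (Yc z)) (s : Fin N ⊕ Fin N) :
    pd s (fun w => f (Yc w)) z = fderiv ℝ f (Yc z) (Yc (Pi.single s 1)) :=
  pd_comp_reindex Sum.inr hf s

lemma pd_inl_comp_Xc (hf : DifferentiableAt ℝ f (Xc z)) (s : Fin N) :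
    pd (Sum.inl s) (fun w => f (Xc w)) z = pd s f (Xc z) := by
  rw [pd_comp_Xc hf, Xc_single_inl, pd]

lemma pd_inr_comp_Xc (hf : DifferentiableAt ℝ f (Xc z)) (s : Fin N) :
    pd (Sum.inr s) (fun w => f (Xc w)) z = 0 := by
  rw [pd_comp_Xc hf, Xc_single_inr, map_zero]

lemma pd_inr_comp_Yc (hf : DifferentiableAt ℝ f (Yc z)) (s : Fin N) :
    pd (Sum.inr s) (fun w => f (Yc w)) z = pd s f (Yc z) := by
  rw [pd_comp_Yc hf, Yc_single_inr, pd]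

lemma pd_inl_comp_Yc (hf : DifferentiableAt ℝ f (Yc z)) (s : Fin N) :
    pd (Sum.inl s) (fun w => f (Yc w)) z = 0 := by
  rw [pd_comp_Yc hf, Yc_single_inl, map_zero]

end Coordinates

section BlockTensor

variable {N : ℕ} {π : (Fin N → ℝ) → Matrix (Fin N) (Fin N) ℝ} {c : (Fin N → ℝ) → ℝ}
  {lam : ℝ} {e : Fin N → ℝ}

lemma contDiff_blockTensor_apply {n : WithTop ℕ∞} (hπ : ∀ a b, ContDiff ℝ n fun x => π x a b)
    (hc : ContDiff ℝ n c) (i j : Fin N ⊕ Fin N) :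
    ContDiff ℝ n fun z => blockTensor lam e (π (Xc z)) (c (Xc z)) (π (Yc z)) i j := by
  rcases i with a | a <;> rcases j with b | b <;>
    simp only [blockTensor, fromBlocks_apply₁₁, fromBlocks_apply₁₂, fromBlocks_apply₂₁,
      fromBlocks_apply₂₂, Matrix.add_apply, Matrix.sub_apply, Matrix.smul_apply, smul_eq_mul,
      vecMulVec_apply]
  · exact contDiff_const.mul ((hπ a b).comp contDiff_Xc)
  · exact ((hπ a b).comp contDiff_Xc).add ((hc.comp contDiff_Xc).mul contDiff_const)
  · exact ((hπ a b).comp contDiff_Xc).sub ((hc.comp contDiff_Xc).mul contDiff_const)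
  · exact (hπ a b).comp contDiff_Yc

lemma pd_inl_blockTensor (hπ : ∀ a b, Differentiable ℝ fun x => π x a b)
    (hc : Differentiable ℝ c) (z : (Fin N ⊕ Fin N) → ℝ) (s : Fin N) (i j : Fin N ⊕ Fin N) :
    pd (Sum.inl s) (fun w => blockTensor lam e (π (Xc w)) (c (Xc w)) (π (Yc w)) i j) z
      = blockTensor lam e (pdMat s π (Xc z)) (pd s c (Xc z)) 0 i j := by
  rcases i with a | a <;> rcases j with b | b <;>
    simp only [blockTensor, fromBlocks_apply₁₁, fromBlocks_apply₁₂, fromBlocks_apply₂₁,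
      fromBlocks_apply₂₂, Matrix.add_apply, Matrix.sub_apply, Matrix.smul_apply, smul_eq_mul,
      vecMulVec_apply, Matrix.zero_apply, pdMat, Matrix.of_apply]
  · rw [pd_inl_comp_Xc (((hπ a b).const_mul lam) _), pd_const_mul (hπ a b _)]
  · rw [pd_inl_comp_Xc ((hπ a b _).fun_add ((hc _).mul_const _)),
      pd_add (hπ a b _) ((hc.mul_const _) _), pd_mul_const (hc _)]
  · rw [pd_inl_comp_Xc ((hπ a b _).fun_sub ((hc _).mul_const _)),
      pd_sub (hπ a b _) ((hc.mul_const _) _), pd_mul_const (hc _)]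
  · exact pd_inl_comp_Yc (hπ a b _) s

lemma pd_inr_blockTensor (hπ : ∀ a b, Differentiable ℝ fun x => π x a b)
    (hc : Differentiable ℝ c) (z : (Fin N ⊕ Fin N) → ℝ) (s : Fin N) (i j : Fin N ⊕ Fin N) :
    pd (Sum.inr s) (fun w => blockTensor lam e (π (Xc w)) (c (Xc w)) (π (Yc w)) i j) z
      = blockTensor lam e 0 0 (pdMat s π (Yc z)) i j := by
  rcases i with a | a <;> rcases j with b | b <;>
    simp only [blockTensor, fromBlocks_apply₁₁, fromBlocks_apply₁₂, fromBlocks_apply₂₁,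
      fromBlocks_apply₂₂, Matrix.add_apply, Matrix.sub_apply, Matrix.smul_apply, smul_eq_mul,
      vecMulVec_apply, Matrix.zero_apply, pdMat, Matrix.of_apply, mul_zero, zero_mul, add_zero,
      sub_zero]
  · exact pd_inr_comp_Xc (((hπ a b).const_mul lam) _) s
  · exact pd_inr_comp_Xc ((hπ a b _).fun_add ((hc _).mul_const _)) s
  · exact pd_inr_comp_Xc ((hπ a b _).fun_sub ((hc _).mul_const _)) s
  · exact pd_inr_comp_Yc (hπ a b _) s

theorem isPoissonTensor_blockTensor (hπ : IsPoissonTensor π)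
    (hconst : ∀ s x y, pdMat s π x = pdMat s π y) (hc : IsCasimir π c)
    (he : ∀ x a b, ∑ s, pdMat s π x a b * e s = 0) :
    IsPoissonTensor fun z => blockTensor lam e (π (Xc z)) (c (Xc z)) (π (Yc z)) := by
  obtain ⟨hπsmooth, hπskew, hπjacobi⟩ := hπ
  have hπdiff : ∀ a b, Differentiable ℝ fun x => π x a b :=
    fun a b => (hπsmooth a b).differentiable (by simp)
  have hcdiff : Differentiable ℝ c := hc.1.differentiable (by simp)
  set F := fun z => blockTensor lam e (π (Xc z)) (c (Xc z)) (π (Yc z))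
  refine ⟨contDiff_blockTensor_apply hπsmooth hc.1,
    fun z => blockTensor_apply_swap (hπskew _) (hπskew _), fun z i j k => ?_⟩
  have hderiv : (fun s => Matrix.of fun i j => pd s (fun w => F w i j) z)
      = blockDeriv lam e (fun s => pdMat s π (Xc z)) (fun s => pd s c (Xc z)) := by
    funext s
    ext i j
    rcases s with s | s
    · exact pd_inl_blockTensor hπdiff hcdiff z s i j
    · rw [Matrix.of_apply, pd_inr_blockTensor hπdiff hcdiff z s i j, hconst s (Yc z) (Xc z)]
      rfl
  have hJ : ∀ x a b d, jacobiator (fun s => pdMat s π x) (π x) a b d = 0 := hπjacobi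
  have hDyx : (fun s => pdMat s π (Yc z)) = fun s => pdMat s π (Xc z) :=
    funext fun s => hconst s _ _
  change jacobiator (fun s => Matrix.of fun i j => pd s (fun w => F w i j) z) (F z) i j k = 0
  rw [hderiv]
  exact jacobiator_blockTensor_eq_zero (hJ _) (hDyx ▸ hJ (Yc z)) (hc.2 _) (he _) i j k

end BlockTensor

lemma pdMat_eq_of_isLinearTensor {N : ℕ} {π : (Fin N → ℝ) → Matrix (Fin N) (Fin N) ℝ}
    (h : IsLinearTensor π) (s : Fin N) (x y : Fin N → ℝ) : pdMat s π x = pdMat s π y := by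
  obtain ⟨C, hC⟩ := h
  ext a b
  let L : (Fin N → ℝ) →L[ℝ] ℝ := ∑ n, C a b n • ContinuousLinearMap.proj n
  have hL : (fun y => π y a b) = L := funext fun y => by simp [L, hC]
  simp only [pdMat, Matrix.of_apply, pd, hL, L.fderiv]

theorem stmt9_general {N : ℕ}
    (π : (Fin N → ℝ) → Matrix (Fin N) (Fin N) ℝ)
    (hπ : IsPoissonTensor π) (hlin : IsLinearTensor π)
    (p : Fin N) (hp : ∀ x i j, pd p (fun y => π y i j) x = 0)
    (c : (Fin N → ℝ) → ℝ) (hc : IsCasimir π c)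
    (lam : ℝ) :
    IsPoissonTensor (fun z : (Fin N ⊕ Fin N) → ℝ =>
      Matrix.fromBlocks
        (lam • π (Xc z))
        (π (Xc z) + c (Xc z) • Matrix.single p p (1 : ℝ))
        (π (Xc z) - c (Xc z) • Matrix.single p p (1 : ℝ))
        (π (Yc z))) := by
  have he : ∀ x a b, ∑ s, pdMat s π x a b * (Pi.single p 1 : Fin N → ℝ) s = 0 := fun x a b => by
    simp [Pi.single_apply, pdMat, hp]
  simp only [Matrix.single_eq_single_vecMulVec_single]
  exact isPoissonTensor_blockTensor hπ (pdMat_eq_of_isLinearTensor hlin) hc he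

/-- for a linear Poisson tensor `π` independent of `x_p` and a Casimir `c`,
the tensor with blocks `[[λπ(x), π(x)+c(x)E_pp],[π(x)−c(x)E_pp, π(y)]]` is Poisson. -/
theorem stmt9 {N : ℕ} (hN : 1 ≤ N)
    (π : (Fin N → ℝ) → Matrix (Fin N) (Fin N) ℝ)
    (hπ : IsPoissonTensor π) (hlin : IsLinearTensor π)
    (p : Fin N) (hp : ∀ x i j, pd p (fun y => π y i j) x = 0)
    (c : (Fin N → ℝ) → ℝ) (hc : IsCasimir π c)
    (lam : ℝ) :
    IsPoissonTensor (fun z : (Fin N ⊕ Fin N) → ℝ =>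
      Matrix.fromBlocks
        (lam • π (Xc z))
        (π (Xc z) + c (Xc z) • Matrix.single p p (1 : ℝ))
        (π (Xc z) - c (Xc z) • Matrix.single p p (1 : ℝ))
        (π (Yc z))) :=
  stmt9_general π hπ hlin p hp c hc lam
end
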